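/- Let x be a real number with x > 0 and x ≠ 1, and let A, B, a₁, a₂, d₁, d₂ be real numbers such that a₁+(x−1)·d₁ > 0, B·ln x ∈ (−π/2, π/2), x^A·cos(B·ln x) = a₁+(x−1)·d₁, and x^A·sin(B·ln x) = a₂+(x−1)·d₂. Then B = (1/ln x)·arctan((a₂+(x−1)·d₂)/(a₁+(x−1)·d₁)). -/
import Mathlib

/-- The formula for `B¹` in the paper's Theorem 3. -/
theorem B1_formula (x : ℝ) (hx : 0 < x) (hx1 : x ≠ 1)
    (A B a₁ a₂ d₁ d₂ : ℝ)
    (hpos : 0 < a₁ + (x - 1) * d₁)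
    (hB : B * Real.log x ∈ Set.Ioo (-(Real.pi / 2)) (Real.pi / 2))
    (hcos : x ^ A * Real.cos (B * Real.log x) = a₁ + (x - 1) * d₁)
    (hsin : x ^ A * Real.sin (B * Real.log x) = a₂ + (x - 1) * d₂) :
    B = (1 / Real.log x) *
        Real.arctan ((a₂ + (x - 1) * d₂) / (a₁ + (x - 1) * d₁)) := by
  have hxA : (0:ℝ) < x ^ A := Real.rpow_pos_of_pos hx A
  have hlog : Real.log x ≠ 0 := Real.log_ne_zero_of_pos_of_ne_one hx hx1
  have hratio : (a₂ + (x - 1) * d₂) / (a₁ + (x - 1) * d₁)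
      = Real.tan (B * Real.log x) := by
    rw [← hcos, ← hsin, Real.tan_eq_sin_div_cos,
      mul_div_mul_left _ _ hxA.ne']
  rw [hratio, Real.arctan_tan hB.1 hB.2]
  field_simp
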